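/- (Proposition 5.4: asymptotics when M = βN.) Fix a natural number p ≥ 2 and a real number β with 0 < β < 1, and let (N_k) be a strictly increasing sequence of positive natural numbers such that for each k, M_k := β · N_k is a natural number with M_k ≡ N_k (mod 2). Let K(N) = (2^N · N^p / (C(N, (N+βN)/2) · C(2p + N − 1, 2p))) · ∑_{m=0}^{p} C(p − m + (N−βN)/2 − 1, p − m) · C(2m + βN − 1, 2m), and define G(N) = √(π N / 2) · (1 − β²)^{(N+1)/2} · ((1+β)/(1−β))^{β N / 2} · (1−β)^p · (2p)! / 2^p · ∑_{m=0}^{p} (2^m · β^{2m} · N^m / ((1−β)^m · (p−m)! · (2m)!)). Then K(N_k)/G(N_k) → 1 as k → ∞. -/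

import Mathlib

/-!
In both finite sums the summand `m = p` dominates: `b = (N - M)/2` and `M = βN` are both
proportional to `N`, so the `m`-th summand of the sum in `K(N)` has order `N^(p+m)`, while the
sum in `G(N)` is a polynomial of degree `p` in `N`. Stirling's formula for the three factorials
in `C(N, (N+M)/2)` gives `C(N, (1+β)N/2) ~ 2^N / S(N)` with
`S(N) = √(πN/2) (1-β²)^((N+1)/2) ((1+β)/(1-β))^(βN/2)`. Hence `K(N)` and `G(N)` are both
asymptotic to `S(N) β^(2p) N^p`.
-/

open Real Filter Finset Topology Asymptotics

theorem isEquivalent_sum_range_succ_of_isLittleO {α E : Type*} [NormedAddCommGroup E]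
    {l : Filter α} {f : ℕ → α → E} {g : α → E} {p : ℕ}
    (hlow : ∀ m < p, f m =o[l] g) (htop : f p ~[l] g) :
    (fun x => ∑ m ∈ range (p + 1), f m x) ~[l] g := by
  simp_rw [sum_range_succ]
  exact (IsLittleO.fun_sum fun m hm => hlow m (mem_range.mp hm)).add_isEquivalent htop

theorem isEquivalent_sum_mul_pow {p : ℕ} (c : ℕ → ℝ) (hc : c p ≠ 0) :
    (fun x : ℝ => ∑ m ∈ range (p + 1), c m * x ^ m) ~[atTop] fun x => c p * x ^ p :=
  isEquivalent_sum_range_succ_of_isLittleO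
    (fun m hm => ((isLittleO_pow_pow_atTop_of_lt hm).const_mul_left (c m)).const_mul_right hc)
    IsEquivalent.refl

theorem isEquivalent_choose_add_sub_one (r : ℕ) :
    (fun n : ℕ => ((r + n - 1).choose r : ℝ)) ~[atTop]
      fun n => (n : ℝ) ^ r / r.factorial := by
  have hshift : (fun n : ℕ => ((r + n - 1 : ℕ) : ℝ)) ~[atTop] fun n => (n : ℝ) := by
    refine (isEquivalent_of_tendsto_one ?_).symm
    refine (tendsto_natCast_div_add_atTop ((r : ℝ) - 1)).congr' ?_
    filter_upwards [eventually_ge_atTop 1] with n hn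
    rw [Pi.div_apply, Nat.cast_sub (by omega)]
    push_cast
    ring
  have hlim : Tendsto (fun n => r + n - 1) atTop atTop :=
    tendsto_atTop_mono (fun n => show n - 1 ≤ r + n - 1 by omega) (tendsto_sub_atTop_nat 1)
  exact ((isEquivalent_choose r).comp_tendsto hlim).trans ((hshift.pow r).div IsEquivalent.refl)

theorem isEquivalent_sum_choose_mul_choose {α : Type*} {l : Filter α} {b M : α → ℕ}
    (hb : Tendsto b l atTop) (hM : Tendsto M l atTop)
    (hbM : (fun x => (b x : ℝ)) =O[l] fun x => (M x : ℝ)) (p : ℕ) :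
    (fun x => ∑ m ∈ range (p + 1),
        ((p - m + b x - 1).choose (p - m) : ℝ) * ((2 * m + M x - 1).choose (2 * m) : ℝ))
      ~[l] fun x => (M x : ℝ) ^ (2 * p) / (2 * p).factorial := by
  refine isEquivalent_sum_range_succ_of_isLittleO (fun m hm => ?_) ?_
  · have hMp : (fun x => (M x : ℝ) ^ (p + m)) =o[l] fun x => (M x : ℝ) ^ (2 * p) :=
      (isLittleO_pow_pow_atTop_of_lt (by omega)).comp_tendsto
        (tendsto_natCast_atTop_atTop.comp hM)
    have hprod : (fun x => (b x : ℝ) ^ (p - m) * (M x : ℝ) ^ (2 * m)) =o[l]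
        fun x => (M x : ℝ) ^ (2 * p) := by
      refine ((hbM.pow (p - m)).mul (isBigO_refl _ _)).trans_isLittleO ?_
      simpa only [← pow_add, show p - m + 2 * m = p + m by omega] using hMp
    refine (((isEquivalent_choose_add_sub_one _).comp_tendsto hb).mul
      ((isEquivalent_choose_add_sub_one _).comp_tendsto hM)).trans_isLittleO ?_
    refine ((hprod.const_mul_left ((p - m).factorial * (2 * m).factorial : ℝ)⁻¹)
      |>.const_mul_right (inv_ne_zero (Nat.cast_ne_zero.mpr (2 * p).factorial_ne_zero))).congr
      (fun x => ?_) (fun x => ?_)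
    · simp only [Pi.mul_apply, Function.comp_apply]
      ring
    · ring
  · simp only [Nat.sub_self, zero_add, Nat.choose_zero_right, Nat.cast_one, one_mul]
    exact (isEquivalent_choose_add_sub_one (2 * p)).comp_tendsto hM

noncomputable def stirlingApprox (x : ℝ) : ℝ := √(2 * x * π) * (x / exp 1) ^ x

theorem stirlingApprox_pos {x : ℝ} (hx : 0 < x) : 0 < stirlingApprox x := by
  unfold stirlingApprox
  positivity

theorem log_stirlingApprox {x : ℝ} (hx : 0 < x) :
    log (stirlingApprox x) = (log 2 + log x + log π) / 2 + x * (log x - 1) := by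
  rw [stirlingApprox, log_mul (by positivity) (by positivity), log_sqrt (by positivity),
    log_rpow (by positivity), log_mul (by positivity) pi_ne_zero, log_mul two_ne_zero hx.ne',
    log_div hx.ne' (exp_ne_zero 1), log_exp]

theorem isEquivalent_choose_stirlingApprox {α : Type*} {l : Filter α} {a b : α → ℕ}
    (ha : Tendsto a l atTop) (hb : Tendsto b l atTop) :
    (fun x => ((a x + b x).choose (a x) : ℝ)) ~[l] fun x =>
      stirlingApprox ((a x + b x : ℕ) : ℝ) / (stirlingApprox (a x) * stirlingApprox (b x)) := by
  have hfac : (fun n : ℕ => (n.factorial : ℝ)) ~[atTop] fun n => stirlingApprox n := by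
    simpa only [stirlingApprox, rpow_natCast] using Stirling.factorial_isEquivalent_stirling
  simp_rw [Nat.cast_add_choose]
  exact (hfac.comp_tendsto (tendsto_atTop_mono (fun x => Nat.le_add_right _ _) ha)).div
    ((hfac.comp_tendsto ha).mul (hfac.comp_tendsto hb))

noncomputable def binomialScale (β N : ℝ) : ℝ :=
  √(π * N / 2) * (1 - β ^ 2) ^ ((N + 1) / 2) * ((1 + β) / (1 - β)) ^ (β * N / 2)

theorem binomialScale_pos {β N : ℝ} (hβ₁ : -1 < β) (hβ₂ : β < 1) (hN : 0 < N) :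
    0 < binomialScale β N := by
  have : 0 < 1 - β := by linarith
  have : 0 < 1 + β := by linarith
  exact mul_pos (mul_pos (by positivity) (rpow_pos_of_pos (by nlinarith) _)) (by positivity)

theorem stirlingApprox_div_stirlingApprox_mul {β N : ℝ} (hβ₁ : -1 < β) (hβ₂ : β < 1)
    (hN : 0 < N) :
    stirlingApprox N / (stirlingApprox ((1 + β) * N / 2) * stirlingApprox ((1 - β) * N / 2)) =
      2 ^ N / binomialScale β N := by
  have h₁ : 0 < 1 + β := by linarith
  have h₂ : 0 < 1 - β := by linarith
  have hA : 0 < (1 + β) * N / 2 := by positivity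
  have hB : 0 < (1 - β) * N / 2 := by positivity
  have hlogA : log ((1 + β) * N / 2) = log (1 + β) + log N - log 2 := by
    rw [log_div (by positivity) two_ne_zero, log_mul h₁.ne' hN.ne']
  have hlogB : log ((1 - β) * N / 2) = log (1 - β) + log N - log 2 := by
    rw [log_div (by positivity) two_ne_zero, log_mul h₂.ne' hN.ne']
  have hSA := stirlingApprox_pos hA
  have hSB := stirlingApprox_pos hB
  have hS := binomialScale_pos hβ₁ hβ₂ hN
  have hR : 0 < √(π * N / 2) := by positivity
  have hX : 0 < (1 - β ^ 2) ^ ((N + 1) / 2) := rpow_pos_of_pos (by nlinarith) _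
  refine log_injOn_pos (Set.mem_Ioi.mpr (div_pos (stirlingApprox_pos hN) (mul_pos hSA hSB)))
    (Set.mem_Ioi.mpr (div_pos (rpow_pos_of_pos two_pos N) hS)) ?_
  rw [log_div (stirlingApprox_pos hN).ne' (mul_pos hSA hSB).ne', log_mul hSA.ne' hSB.ne',
    log_stirlingApprox hN, log_stirlingApprox hA, log_stirlingApprox hB, hlogA, hlogB,
    log_div (by positivity) hS.ne', binomialScale, log_mul (mul_pos hR hX).ne' (by positivity),
    log_mul hR.ne' hX.ne', log_sqrt (by positivity), log_rpow two_pos,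
    log_rpow (by nlinarith), log_rpow (by positivity),
    show 1 - β ^ 2 = (1 + β) * (1 - β) by ring,
    log_mul h₁.ne' h₂.ne', log_div h₁.ne' h₂.ne', log_div (by positivity) two_ne_zero,
    log_mul pi_ne_zero hN.ne']
  ring

theorem isEquivalent_choose_of_proportional {α : Type*} {l : Filter α} {β : ℝ}
    (hβ₁ : -1 < β) (hβ₂ : β < 1) {n a b : α → ℕ} (hn : Tendsto n l atTop)
    (ha : ∀ x, (a x : ℝ) = (1 + β) * n x / 2) (hb : ∀ x, (b x : ℝ) = (1 - β) * n x / 2) :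
    (fun x => ((n x).choose (a x) : ℝ)) ~[l]
      fun x => (2 : ℝ) ^ n x / binomialScale β (n x) := by
  have hab : ∀ x, a x + b x = n x := fun x => by
    exact_mod_cast show (a x : ℝ) + b x = n x by rw [ha, hb]; ring
  have hn' : Tendsto (fun x => (n x : ℝ)) l atTop := tendsto_natCast_atTop_atTop.comp hn
  have ha' : Tendsto a l atTop := (tendsto_natCast_atTop_iff (R := ℝ)).mp <| by
    simpa only [ha] using (hn'.const_mul_atTop (by linarith : 0 < 1 + β)).atTop_div_const two_pos
  have hb' : Tendsto b l atTop := (tendsto_natCast_atTop_iff (R := ℝ)).mp <| by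
    simpa only [hb] using (hn'.const_mul_atTop (by linarith : 0 < 1 - β)).atTop_div_const two_pos
  refine ((isEquivalent_choose_stirlingApprox ha' hb').congr_left
    (.of_forall fun x => by dsimp only; rw [hab])).congr_right ?_
  filter_upwards [hn.eventually_ge_atTop 1] with x hx
  rw [hab, ha, hb, stirlingApprox_div_stirlingApprox_mul hβ₁ hβ₂ (by exact_mod_cast hx),
    rpow_natCast]

theorem tendsto_div_nhds_one_of_isEquivalent {α 𝕜 : Type*} [NormedField 𝕜] {l : Filter α}
    {u v w : α → 𝕜} (hu : u ~[l] w) (hv : v ~[l] w) (hw : ∀ᶠ x in l, w x ≠ 0) :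
    Tendsto (fun x => u x / v x) l (𝓝 1) := by
  have := ((isEquivalent_iff_tendsto_one hw).mp hu).div ((isEquivalent_iff_tendsto_one hw).mp hv)
    one_ne_zero
  rw [div_one] at this
  refine this.congr' ?_
  filter_upwards [hw] with x hx
  exact div_div_div_cancel_right₀ hx _ _

section Parity

variable {β : ℝ} {M N : ℕ}

theorem cast_add_div_two_of_cast_eq_mul (hM : (M : ℝ) = β * N) (h : M % 2 = N % 2) :
    (((N + M) / 2 : ℕ) : ℝ) = (1 + β) * N / 2 := by
  rw [Nat.cast_div (by omega) two_ne_zero]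
  push_cast
  rw [hM]
  ring

theorem cast_sub_div_two_of_cast_eq_mul (hβ : β ≤ 1) (hM : (M : ℝ) = β * N)
    (h : M % 2 = N % 2) : (((N - M) / 2 : ℕ) : ℝ) = (1 - β) * N / 2 := by
  have hMN : M ≤ N := by
    exact_mod_cast show (M : ℝ) ≤ N by rw [hM]; nlinarith [N.cast_nonneg (α := ℝ)]
  rw [Nat.cast_div (by omega) two_ne_zero, Nat.cast_sub hMN]
  push_cast
  rw [hM]
  ring

end Parity

/-- `K(N)` of the paper, with `M = βN` as a separate argument. -/
noncomputable def bestConstant (p N M : ℕ) : ℝ :=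
  (2 : ℝ) ^ N * (N : ℝ) ^ p /
      ((N.choose ((N + M) / 2) : ℝ) * ((2 * p + N - 1).choose (2 * p) : ℝ)) *
    ∑ m ∈ range (p + 1),
      ((p - m + (N - M) / 2 - 1).choose (p - m) : ℝ) * ((2 * m + M - 1).choose (2 * m) : ℝ)

/-- `G(N)` of the paper. -/
noncomputable def bestConstantApprox (p : ℕ) (β : ℝ) (N : ℕ) : ℝ :=
  binomialScale β N * (1 - β) ^ p * ((2 * p).factorial : ℝ) / 2 ^ p *
    ∑ m ∈ range (p + 1),
      (2 : ℝ) ^ m * β ^ (2 * m) * (N : ℝ) ^ m /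
        ((1 - β) ^ m * ((p - m).factorial : ℝ) * ((2 * m).factorial : ℝ))

section ProportionalRegime

variable {α : Type*} {l : Filter α} (p : ℕ) {β : ℝ} {N M : α → ℕ}

theorem isEquivalent_bestConstant (hβ₀ : 0 < β) (hβ₁ : β < 1) (hN : Tendsto N l atTop)
    (hM : ∀ x, (M x : ℝ) = β * N x) (hpar : ∀ x, M x % 2 = N x % 2) :
    (fun x => bestConstant p (N x) (M x)) ~[l]
      fun x => binomialScale β (N x) * β ^ (2 * p) * (N x : ℝ) ^ p := by
  have hN' : Tendsto (fun x => (N x : ℝ)) l atTop := tendsto_natCast_atTop_atTop.comp hN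
  have ha x := cast_add_div_two_of_cast_eq_mul (hM x) (hpar x)
  have hb x := cast_sub_div_two_of_cast_eq_mul hβ₁.le (hM x) (hpar x)
  have hMtop : Tendsto M l atTop := (tendsto_natCast_atTop_iff (R := ℝ)).mp <| by
    simpa only [hM] using hN'.const_mul_atTop hβ₀
  have hbtop : Tendsto (fun x => (N x - M x) / 2) l atTop :=
    (tendsto_natCast_atTop_iff (R := ℝ)).mp <| by
      simpa only [hb] using (hN'.const_mul_atTop (by linarith : 0 < 1 - β)).atTop_div_const two_pos
  have hbM : (fun x => (((N x - M x) / 2 : ℕ) : ℝ)) =O[l] fun x => (M x : ℝ) :=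
    ((isBigO_refl _ _).const_mul_left ((1 - β) / (2 * β))).congr_left fun x => by
      rw [hb, hM]
      field_simp
  have hC := isEquivalent_choose_of_proportional (by linarith) hβ₁ hN ha hb
  have hC₂ := (isEquivalent_choose_add_sub_one (2 * p)).comp_tendsto hN
  have hsum := isEquivalent_sum_choose_mul_choose hbtop hMtop hbM p
  refine ((IsEquivalent.refl.div (hC.mul hC₂)).mul hsum).congr_right ?_
  filter_upwards [hN.eventually_gt_atTop 0] with x hx
  have := binomialScale_pos (by linarith) hβ₁ (Nat.cast_pos.mpr hx)
  have : (N x : ℝ) ≠ 0 := by positivity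
  simp only [Pi.mul_apply, Pi.div_apply, Function.comp_apply]
  rw [hM]
  field_simp
  ring

theorem isEquivalent_bestConstantApprox (hβ₀ : β ≠ 0) (hβ₁ : β ≠ 1)
    (hN : Tendsto N l atTop) :
    (fun x => bestConstantApprox p β (N x)) ~[l]
      fun x => binomialScale β (N x) * β ^ (2 * p) * (N x : ℝ) ^ p := by
  have : 1 - β ≠ 0 := sub_ne_zero.mpr hβ₁.symm
  have hT := (isEquivalent_sum_mul_pow (p := p)
    (fun m => 2 ^ m * β ^ (2 * m) / ((1 - β) ^ m * (p - m).factorial * (2 * m).factorial))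
    (by positivity)).comp_tendsto (tendsto_natCast_atTop_atTop.comp hN)
  refine (IsEquivalent.refl.mul (hT.congr_left (.of_forall fun x =>
    sum_congr rfl fun m _ => (mul_div_right_comm _ _ _).symm))).congr_right (.of_forall fun x => ?_)
  simp only [Pi.mul_apply, Function.comp_apply, Nat.sub_self, Nat.factorial_zero, Nat.cast_one]
  field_simp

end ProportionalRegime

theorem asymptotics_proportional_sum_general (p : ℕ)
    (β : ℝ) (hβ0 : 0 < β) (hβ1 : β < 1)
    (Nk : ℕ → ℕ) (hmono : StrictMono Nk)
    (Mk : ℕ → ℕ)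
    (hMk : ∀ k, (Mk k : ℝ) = β * (Nk k : ℝ))
    (hparity : ∀ k, Mk k % 2 = Nk k % 2) :
    Tendsto
      (fun k : ℕ =>
        (((2 : ℝ) ^ (Nk k) * ((Nk k : ℕ) : ℝ) ^ p /
              (((Nk k).choose ((Nk k + Mk k) / 2) : ℝ) *
                ((2 * p + Nk k - 1).choose (2 * p) : ℝ))) *
            ∑ m ∈ Finset.range (p + 1),
              ((p - m + (Nk k - Mk k) / 2 - 1).choose (p - m) : ℝ) *
                ((2 * m + Mk k - 1).choose (2 * m) : ℝ))
          /
        (Real.sqrt (π * (Nk k : ℝ) / 2) *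
            (1 - β ^ 2) ^ (((Nk k : ℝ) + 1) / 2) *
            ((1 + β) / (1 - β)) ^ (β * (Nk k : ℝ) / 2) *
            (1 - β) ^ p * ((2 * p).factorial : ℝ) / 2 ^ p *
            ∑ m ∈ Finset.range (p + 1),
              (2 : ℝ) ^ m * β ^ (2 * m) * (Nk k : ℝ) ^ m /
                ((1 - β) ^ m * ((p - m).factorial : ℝ) * ((2 * m).factorial : ℝ))))
      atTop (nhds 1) := by
  have hN := hmono.tendsto_atTop
  change Tendsto (fun k => bestConstant p (Nk k) (Mk k) / bestConstantApprox p β (Nk k))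
    atTop (𝓝 1)
  refine tendsto_div_nhds_one_of_isEquivalent (isEquivalent_bestConstant p hβ0 hβ1 hN hMk hparity)
    (isEquivalent_bestConstantApprox p hβ0.ne' hβ1.ne hN) ?_
  filter_upwards [hN.eventually_gt_atTop 0] with k hk
  have := binomialScale_pos (by linarith) hβ1 (Nat.cast_pos.mpr hk)
  positivity

/-- **Proposition 5.4 (asymptotics when `M = βN`).**
Along a strictly increasing sequence `N_k` of positive naturals for which
`M_k = β N_k` is a natural number of the same parity as `N_k`, the best
constant
`K(N) = (2^N N^p / (C(N,(N+M)/2) C(2p+N-1,2p))) *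
  ∑_{m=0}^{p} C(p-m+(N-M)/2-1, p-m) C(2m+M-1, 2m)` (with `M = βN`)
satisfies `K(N_k)/G(N_k) → 1`, where
`G(N) = √(πN/2) (1-β²)^{(N+1)/2} ((1+β)/(1-β))^{βN/2} (1-β)^p (2p)!/2^p ·
  ∑_{m=0}^{p} 2^m β^{2m} N^m / ((1-β)^m (p-m)!(2m)!)`. -/
theorem asymptotics_proportional_sum (p : ℕ) (hp : 2 ≤ p)
    (β : ℝ) (hβ0 : 0 < β) (hβ1 : β < 1)
    (Nk : ℕ → ℕ) (hmono : StrictMono Nk) (hpos : ∀ k, 0 < Nk k)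
    (Mk : ℕ → ℕ)
    (hMk : ∀ k, (Mk k : ℝ) = β * (Nk k : ℝ))
    (hparity : ∀ k, Mk k % 2 = Nk k % 2) :
    Tendsto
      (fun k : ℕ =>
        (((2 : ℝ) ^ (Nk k) * ((Nk k : ℕ) : ℝ) ^ p /
              (((Nk k).choose ((Nk k + Mk k) / 2) : ℝ) *
                ((2 * p + Nk k - 1).choose (2 * p) : ℝ))) *
            ∑ m ∈ Finset.range (p + 1),
              ((p - m + (Nk k - Mk k) / 2 - 1).choose (p - m) : ℝ) *
                ((2 * m + Mk k - 1).choose (2 * m) : ℝ))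
          /
        (Real.sqrt (π * (Nk k : ℝ) / 2) *
            (1 - β ^ 2) ^ (((Nk k : ℝ) + 1) / 2) *
            ((1 + β) / (1 - β)) ^ (β * (Nk k : ℝ) / 2) *
            (1 - β) ^ p * ((2 * p).factorial : ℝ) / 2 ^ p *
            ∑ m ∈ Finset.range (p + 1),
              (2 : ℝ) ^ m * β ^ (2 * m) * (Nk k : ℝ) ^ m /
                ((1 - β) ^ m * ((p - m).factorial : ℝ) * ((2 * m).factorial : ℝ))))
      atTop (nhds 1) :=
  asymptotics_proportional_sum_general p β hβ0 hβ1 Nk hmono Mk hMk hparity
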